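/- arXiv:1605.09596 — 3 statements merged into one kernel-verified Lean document; each statement's English description precedes it below -/
import Mathlib

section
/- Let m ≥ 2 and let b_1, …, b_m be positive real numbers satisfying 2b_1 ≥ 1 + b_2, 2b_k ≥ 1 + b_{k+1} + b_{k-1} for 2 ≤ k ≤ m−1, and 2b_m ≥ 1 + 2b_{m−1}. Then 2b_k ≥ 2km − k² for all 1 ≤ k ≤ m. -/
theorem stmt_0 (m : ℕ) (hm : 2 ≤ m) (b : ℕ → ℝ)
    (hpos : ∀ k, 1 ≤ k → k ≤ m → 0 < b k)
    (h1 : 2 * b 1 ≥ 1 + b 2)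
    (hk : ∀ k, 2 ≤ k → k ≤ m - 1 → 2 * b k ≥ 1 + b (k + 1) + b (k - 1))
    (hlast : 2 * b m ≥ 1 + 2 * b (m - 1)) :
    ∀ k, 1 ≤ k → k ≤ m → 2 * b k ≥ 2 * (k : ℝ) * (m : ℝ) - (k : ℝ) ^ 2 := by
  -- D j : the difference b (m-j) - b (m-j-1) is at least j + 1/2, for j ≤ m - 2
  have D : ∀ j, j ≤ m - 2 → b (m - j) - b (m - j - 1) ≥ (j : ℝ) + 1/2 := by
    intro j
    induction j with
    | zero =>
      intro _
      simp only [Nat.sub_zero, Nat.cast_zero]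
      linarith
    | succ j ih =>
      intro hj
      have ihj := ih (by omega)
      have hk' := hk (m - (j+1)) (by omega) (by omega)
      have e1 : m - (j+1) + 1 = m - j := by omega
      have e2 : m - j - 1 = m - (j+1) := by omega
      have e3 : m - (j+1) - 1 = m - (j+1) - 1 := rfl
      rw [e1] at hk'
      rw [e2] at ihj
      push_cast
      linarith
  -- rephrase D for indices 2 ≤ k ≤ m
  have D' : ∀ k, 2 ≤ k → k ≤ m → b k - b (k - 1) ≥ (m : ℝ) - (k : ℝ) + 1/2 := by
    intro k hk2 hkm
    have h := D (m - k) (by omega)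
    have e : m - (m - k) = k := by omega
    rw [e] at h
    have : ((m - k : ℕ) : ℝ) = (m : ℝ) - (k : ℝ) := by
      push_cast [Nat.cast_sub hkm]; ring
    linarith [this ▸ h]
  -- base case: 2 * b 1 ≥ 2 m - 1
  have hb1 : 2 * b 1 ≥ 2 * (m : ℝ) - 1 := by
    have h2 := D' 2 le_rfl hm
    norm_num at h2
    linarith
  intro k hk1 hkm
  induction k with
  | zero => omega
  | succ k ih =>
    rcases Nat.eq_or_lt_of_le hk1 with h | h
    · -- k + 1 = 1
      have : k = 0 := by omega
      subst this
      push_cast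
      linarith
    · have hk2 : 1 ≤ k := by omega
      have ihk := ih hk2 (by omega)
      have hd := D' (k+1) (by omega) hkm
      push_cast at hd ⊢
      nlinarith [hd, ihk]
end

section
/- Let m ≥ 2 and let A_1, …, A_m be positive reals. Define B_1 = 2(A_1 − 1) and B_k = (1 − A_k^{-1}) − (A_{k−1} − 1) for 2 ≤ k ≤ m. Suppose B_1 ≤ B_2, B_k ≤ A_k^{-1} B_{k+1} for 2 ≤ k ≤ m−1, and B_m ≤ −2(1 − A_m^{-1}). Then A_m ≤ 1. -/
theorem stmt_2 (m : ℕ) (hm : 2 ≤ m) (A B : ℕ → ℝ)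
    (hA : ∀ k, 1 ≤ k → k ≤ m → 0 < A k)
    (hB1 : B 1 = 2 * (A 1 - 1))
    (hBk : ∀ k, 2 ≤ k → k ≤ m → B k = (1 - (A k)⁻¹) - (A (k - 1) - 1))
    (h12 : B 1 ≤ B 2)
    (hchain : ∀ k, 2 ≤ k → k ≤ m - 1 → B k ≤ (A k)⁻¹ * B (k + 1))
    (hlast : B m ≤ -2 * (1 - (A m)⁻¹)) :
    A m ≤ 1 := by
  by_contra h
  push_neg at h
  have hAm : 0 < A m := hA m (by omega) le_rfl
  have hinv : (A m)⁻¹ < 1 := by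
    have := mul_inv_cancel₀ (ne_of_gt hAm)
    nlinarith [inv_pos.2 hAm]
  have hBm : B m < 0 := by linarith
  -- backward induction: B (m - j) < 0 for 2 ≤ m - j
  have neg : ∀ j, 2 ≤ m - j → B (m - j) < 0 := by
    intro j
    induction j with
    | zero => intro _; simpa using hBm
    | succ j ih =>
      intro h2
      have hj1 : j + 1 ≤ m := by omega
      have hmj : 2 ≤ m - j := by omega
      have hc := hchain (m - (j + 1)) h2 (by omega)
      have hsucc : m - (j + 1) + 1 = m - j := by omega
      rw [hsucc] at hc
      have hBnext := ih hmj
      have hApos : 0 < (A (m - (j + 1)))⁻¹ :=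
        inv_pos.2 (hA _ (by omega) (by omega))
      nlinarith
  have negk : ∀ k, 2 ≤ k → k ≤ m → B k < 0 := by
    intro k h2 hk
    have := neg (m - k) (by omega)
    rwa [show m - (m - k) = k by omega] at this
  have hA1 : A 1 < 1 := by
    have hB2 : B 2 < 0 := negk 2 le_rfl hm
    have := hB1
    linarith
  have Alt : ∀ k, 1 ≤ k → k ≤ m → A k < 1 := by
    intro k
    induction k with
    | zero => omega
    | succ k ih =>
      intro _ hk1
      rcases Nat.eq_zero_or_pos k with hk0 | hkpos
      · subst hk0; simpa using hA1
      · have hAk : A k < 1 := ih hkpos (by omega)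
        have hBk1 : B (k + 1) < 0 := negk (k + 1) (by omega) hk1
        have heq := hBk (k + 1) (by omega) hk1
        simp only [Nat.add_sub_cancel] at heq
        have hpos : 0 < A (k + 1) := hA (k + 1) (by omega) hk1
        have hinv1 : 1 < (A (k + 1))⁻¹ := by
          rw [heq] at hBk1; linarith
        have := mul_inv_cancel₀ (ne_of_gt hpos)
        nlinarith
  exact absurd (Alt m (by omega) le_rfl) (by linarith)
end

section
/- Let m ≥ 2 and A_1, …, A_m be positive reals with A_1 < 1 and A_m < 1, and suppose B_k ≤ A_k^{-1} B_{k+1} for 1 ≤ k ≤ m−1, where B_k = (1 − A_k^{-1}) − (A_{k−1} − 1) for 2 ≤ k ≤ m and B_1 is any real with B_1 ≤ A_1^{-1}B_2. Then A_k < 1 for all 1 ≤ k ≤ m. -/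
theorem stmt_3 (m : ℕ) (hm : 2 ≤ m) (A B : ℕ → ℝ)
    (hA : ∀ k, 1 ≤ k → k ≤ m → 0 < A k)
    (hA1 : A 1 < 1) (hAm : A m < 1)
    (hBk : ∀ k, 2 ≤ k → k ≤ m → B k = (1 - (A k)⁻¹) - (A (k - 1) - 1))
    (hchain : ∀ k, 1 ≤ k → k ≤ m - 1 → B k ≤ (A k)⁻¹ * B (k + 1)) :
    ∀ k, 1 ≤ k → k ≤ m → A k < 1 := by
  -- positivity propagates upward
  have hpos : ∀ j i, 1 ≤ i → i ≤ j → j ≤ m → 0 < B i → 0 < B j := by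
    intro j
    induction j with
    | zero => intro i hi hij _ _; omega
    | succ n ih =>
      intro i hi hij hjm hBi
      rcases eq_or_lt_of_le hij with rfl | h
      · exact hBi
      · have hn : 0 < B n := ih i hi (by omega) (by omega) hBi
        have hAn : 0 < A n := hA n (by omega) (by omega)
        have hc := hchain n (by omega) (by omega)
        by_contra h'
        push_neg at h'
        have : (A n)⁻¹ * B (n + 1) ≤ 0 :=
          mul_nonpos_of_nonneg_of_nonpos (le_of_lt (inv_pos.mpr hAn)) h'
        linarith
  intro k hk hkm
  rcases le_or_gt (B k) 0 with hBk0 | hBk0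
  · -- B k ≤ 0, so all B j ≤ 0 for j ≤ k; upward induction from A 1 < 1
    have hneg : ∀ j, 1 ≤ j → j ≤ k → B j ≤ 0 := by
      intro j hj hjk
      by_contra h'
      push_neg at h'
      exact absurd (hpos k j hj hjk (by omega) h') (not_lt.mpr hBk0)
    have hup : ∀ j, 1 ≤ j → j ≤ k → A j < 1 := by
      intro j
      induction j with
      | zero => omega
      | succ n ih =>
        intro _ hjk
        rcases Nat.eq_zero_or_pos n with rfl | hn
        · exact hA1
        · have hAn1 : A n < 1 := ih (by omega) (by omega)
          have hB : B (n + 1) ≤ 0 := hneg (n + 1) (by omega) hjk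
          have heq := hBk (n + 1) (by omega) (by omega)
          simp only [Nat.add_sub_cancel] at heq
          have hApos : 0 < A (n + 1) := hA (n + 1) (by omega) (by omega)
          have hinv : 1 < (A (n + 1))⁻¹ := by
            rw [heq] at hB; linarith
          nlinarith [mul_pos hApos (inv_pos.mpr hApos),
            mul_inv_cancel₀ (ne_of_gt hApos)]
    exact hup k hk (le_refl k)
  · -- B k > 0, so all B j > 0 for j ≥ k; downward induction from A m < 1
    have hdown : ∀ d j, j + d = m → k ≤ j → A j < 1 := by
      intro d
      induction d with
      | zero =>
        intro j hj _
        have hjm : j = m := by omega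
        rw [hjm]; exact hAm
      | succ n ih =>
        intro j hj hkj
        have hAj1 : A (j + 1) < 1 := ih (j + 1) (by omega) (by omega)
        have hBj1 : 0 < B (j + 1) := hpos (j + 1) k hk (by omega) (by omega) hBk0
        have heq := hBk (j + 1) (by omega) (by omega)
        simp only [Nat.add_sub_cancel] at heq
        have hApos : 0 < A (j + 1) := hA (j + 1) (by omega) (by omega)
        have hinv : 1 < (A (j + 1))⁻¹ := by
          have := mul_inv_cancel₀ (ne_of_gt hApos)
          nlinarith
        rw [heq] at hBj1
        linarith
    exact hdown (m - k) k (by omega) (le_refl k)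
end
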